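/- arXiv:2411.04603 — 3 statements merged into one kernel-verified Lean document; each statement's English description precedes it below -/
import Mathlib

section
/- Let θ ∈ ℝ^d with θ_d ≠ 0 and B = B(θ) the companion matrix. For every j = 1,...,d, the first column of B^{-j} satisfies (B^{-j})_{k,1} = 0 for all k = 1,...,d−j, and (B^{-j})_{d−j+1,1} = 1/θ_d. -/
/-!
Rows `2, …, d` of `B` are the unit rows `e₁ᵀ, …, e_{d-1}ᵀ`, so rows `1, …, d-1` of `B⁻¹` are
`e₂ᵀ, …, e_dᵀ`: away from the last coordinate, `B⁻¹` shifts vectors up by one. The last column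
of `B` is `θ_d e₁`, so the first column of `B⁻¹` is `e_d / θ_d`, and the first column of `B^{-j}`
is this vector shifted up `j - 1` times.
-/

open Matrix

section ShiftRows

variable {R : Type*} [Semiring R] {N : ℕ} {A : Matrix (Fin N) (Fin N) R}

theorem Matrix.pow_apply_of_shift_rows
    (hA : ∀ k m : Fin N, (k : ℕ) + 1 < N → A k m = if (m : ℕ) = k + 1 then 1 else 0)
    (j : ℕ) (k m : Fin N) (hk : (k : ℕ) + j < N) :
    (A ^ j) k m = if (m : ℕ) = k + j then 1 else 0 := by
  induction j generalizing k with
  | zero => simp [one_apply, Fin.ext_iff, eq_comm]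
  | succ j ih =>
    have hk1 : (k : ℕ) + 1 < N := by omega
    rw [pow_succ', mul_apply, Finset.sum_eq_single ⟨k + 1, hk1⟩]
    · rw [hA k _ hk1, if_pos rfl, one_mul, ih _ (by simp only; omega)]
      simp only [add_assoc, add_comm 1 j]
    · intro l _ hl
      rw [hA k l hk1, if_neg (fun h => hl (Fin.ext h)), zero_mul]
    · simp

theorem Matrix.pow_succ_apply_of_shift_rows
    (hA : ∀ k m : Fin N, (k : ℕ) + 1 < N → A k m = if (m : ℕ) = k + 1 then 1 else 0)
    (j : ℕ) (k c : Fin N) (hk : (k : ℕ) + j < N) :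
    (A ^ (j + 1)) k c = A ⟨k + j, hk⟩ c := by
  rw [pow_succ, mul_apply, Finset.sum_eq_single ⟨k + j, hk⟩]
  · rw [pow_apply_of_shift_rows hA j k _ hk, if_pos rfl, one_mul]
  · intro l _ hl
    rw [pow_apply_of_shift_rows hA j k l hk, if_neg (fun h => hl (Fin.ext h)), zero_mul]
  · simp

end ShiftRows

section UnitRowCol

variable {ι R : Type*} [Fintype ι] [DecidableEq ι]

theorem Matrix.inv_apply_of_row_eq_single [CommRing R] {A : Matrix ι ι R} (hA : IsUnit A.det)
    {i k : ι} (h : ∀ m, A i m = if m = k then 1 else 0) (m : ι) :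
    A⁻¹ k m = if i = m then 1 else 0 := by
  rw [← one_apply, ← mul_nonsing_inv A hA, mul_apply]
  simp [h]

theorem Matrix.inv_apply_of_col_eq_smul_single [Field R] {A : Matrix ι ι R} (hA : IsUnit A.det)
    {c r : ι} {a : R} (ha : a ≠ 0) (h : ∀ i, A i c = if i = r then a else 0) (k : ι) :
    A⁻¹ k r = if k = c then a⁻¹ else 0 := by
  have : A⁻¹ k r * a = if k = c then 1 else 0 := by
    rw [← one_apply, ← nonsing_inv_mul A hA, mul_apply]
    simp [h]
  split_ifs at this ⊢ with hkc
  · exact eq_inv_of_mul_eq_one_left this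
  · exact (mul_eq_zero.mp this).resolve_right ha

end UnitRowCol

section Companion

variable {K : Type*} [Field K] {n : ℕ}

def companion (θ : Fin (n + 1) → K) : Matrix (Fin (n + 1)) (Fin (n + 1)) K :=
  Matrix.of fun i j => if i = 0 then θ j else if (i : ℕ) = j + 1 then 1 else 0

theorem companion_succ_apply (θ : Fin (n + 1) → K) (i : Fin n) (m : Fin (n + 1)) :
    companion θ i.succ m = if m = i.castSucc then 1 else 0 := by
  rw [companion, of_apply, if_neg i.succ_ne_zero]
  simp only [Fin.val_succ, Fin.ext_iff, Fin.val_castSucc, add_left_inj, eq_comm]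

theorem companion_apply_last (θ : Fin (n + 1) → K) (i : Fin (n + 1)) :
    companion θ i (Fin.last n) = if i = 0 then θ (Fin.last n) else 0 := by
  have : (i : ℕ) ≠ n + 1 := by omega
  simp only [companion, of_apply, Fin.val_last, this, if_false]

theorem companion_mulVec_succ (θ : Fin (n + 1) → K) (v : Fin (n + 1) → K) (i : Fin n) :
    (companion θ *ᵥ v) i.succ = v i.castSucc := by
  simp [mulVec, dotProduct, companion_succ_apply]

theorem companion_mulVec_zero (θ : Fin (n + 1) → K) (v : Fin (n + 1) → K) :
    (companion θ *ᵥ v) 0 = ∑ j, θ j * v j := by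
  simp [mulVec, dotProduct, companion]

theorem isUnit_det_companion {θ : Fin (n + 1) → K} (hθ : θ (Fin.last n) ≠ 0) :
    IsUnit (companion θ).det := by
  refine isUnit_iff_ne_zero.mpr fun hdet => ?_
  obtain ⟨v, hv, hBv⟩ := exists_mulVec_eq_zero_iff.mpr hdet
  have hinit : ∀ i : Fin n, v i.castSucc = 0 := fun i => by
    rw [← companion_mulVec_succ θ v, hBv, Pi.zero_apply]
  have hlast : v (Fin.last n) = 0 := by
    have h0 := congrFun hBv 0
    rw [companion_mulVec_zero, Fin.sum_univ_castSucc] at h0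
    simpa [hinit, hθ] using h0
  exact hv (funext fun i => Fin.lastCases hlast hinit i)

theorem companion_inv_apply_of_lt {θ : Fin (n + 1) → K} (hθ : θ (Fin.last n) ≠ 0)
    (k m : Fin (n + 1)) (hk : (k : ℕ) + 1 < n + 1) :
    (companion θ)⁻¹ k m = if (m : ℕ) = k + 1 then 1 else 0 := by
  have hrow : ∀ m, companion θ ⟨k + 1, hk⟩ m = if m = k then 1 else 0 :=
    companion_succ_apply θ ⟨k, by omega⟩
  rw [inv_apply_of_row_eq_single (isUnit_det_companion hθ) hrow]
  simp [Fin.ext_iff, eq_comm]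

theorem companion_inv_apply_zero {θ : Fin (n + 1) → K} (hθ : θ (Fin.last n) ≠ 0)
    (k : Fin (n + 1)) :
    (companion θ)⁻¹ k 0 = if k = Fin.last n then (θ (Fin.last n))⁻¹ else 0 :=
  inv_apply_of_col_eq_smul_single (isUnit_det_companion hθ) hθ (companion_apply_last θ) k

theorem companion_inv_pow_succ_apply_zero {θ : Fin (n + 1) → K} (hθ : θ (Fin.last n) ≠ 0)
    (j : ℕ) (k : Fin (n + 1)) (hk : (k : ℕ) + j ≤ n) :
    ((companion θ)⁻¹ ^ (j + 1)) k 0 = if (k : ℕ) + j = n then (θ (Fin.last n))⁻¹ else 0 := by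
  rw [pow_succ_apply_of_shift_rows (companion_inv_apply_of_lt hθ) j k 0 (by omega),
    companion_inv_apply_zero hθ]
  simp only [Fin.ext_iff, Fin.val_last]

end Companion

/-- for `j = 1,…,d` (`d = n+1`), the first column of `B^{-j}` has
zero entries in rows `1,…,d-j` and entry `1/θ_d` in row `d-j+1`. -/
theorem companion_inv_pow_first_col (n : ℕ) (θ : Fin (n+1) → ℝ)
    (hθ : θ (Fin.last n) ≠ 0)
    (B : Matrix (Fin (n+1)) (Fin (n+1)) ℝ)
    (hB : ∀ i j : Fin (n+1),
      B i j = if i = 0 then θ j else if (i : ℕ) = (j : ℕ) + 1 then 1 else 0) :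
    ∀ j : ℕ, (hj1 : 1 ≤ j) → j ≤ n + 1 →
      (∀ k : Fin (n+1), (k : ℕ) < n + 1 - j → (B⁻¹ ^ j) k 0 = 0) ∧
      (B⁻¹ ^ j) ⟨n + 1 - j, by omega⟩ 0 = 1 / θ (Fin.last n) := by
  obtain rfl : B = companion θ := Matrix.ext hB
  rintro _ hj1 hj
  obtain ⟨j, rfl⟩ := Nat.exists_eq_add_of_le' hj1
  refine ⟨fun k hk => ?_, ?_⟩
  · rw [companion_inv_pow_succ_apply_zero hθ j k (by omega), if_neg (by omega)]
  · rw [companion_inv_pow_succ_apply_zero hθ j _ (by simp only; omega),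
      if_pos (by simp only; omega), one_div]
end

section
/- Let d = 2 and θ = (θ₁, θ₂) ∈ ℝ². Both eigenvalues of the companion matrix B(θ) = [[θ₁, θ₂],[1, 0]] have absolute value strictly greater than 1 if and only if either θ₂ > 1 + |θ₁|, or (θ₂ < −1 and θ₂ < 1 − |θ₁|). -/
/-!
Write the roots as `a, b` with `a + b = θ₁` and `a b = -θ₂`, and note that the region is
`1 < |θ₂| ∧ |θ₁| < |1 - θ₂|`, i.e. `1 < |ab| ∧ |a + b| < |1 + ab|`. As `a + b` and `a b` are real,
either both roots are real or `b = conj a`. For real roots the identity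
`(1 + ab)² - (a + b)² = (1 - a²)(1 - b²)` shows that, once `|ab| > 1`, the second condition says
exactly that `|a|` and `|b|` lie on the same side of `1`. For conjugate roots `ab = ‖a‖²`, and
`|a + b| = 2|Re a| ≤ 2‖a‖ < 1 + ‖a‖²` holds automatically when `‖a‖ > 1`.
-/

open ComplexConjugate

theorem forall_quadratic_root_iff {R : Type*} [CommRing R] [NoZeroDivisors R] (a b : R)
    (P : R → Prop) : (∀ z, z ^ 2 - (a + b) * z + a * b = 0 → P z) ↔ P a ∧ P b := by
  have hroot : ∀ z, z ^ 2 - (a + b) * z + a * b = 0 ↔ z = a ∨ z = b := fun z => by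
    rw [show z ^ 2 - (a + b) * z + a * b = (z - a) * (z - b) by ring, mul_eq_zero,
      sub_eq_zero, sub_eq_zero]
  simp only [hroot, forall_eq_or_imp, forall_eq]

theorem exists_add_eq_and_mul_eq {K : Type*} [Field K] [IsAlgClosed K] [NeZero (2 : K)]
    (s p : K) : ∃ a b : K, a + b = s ∧ a * b = p := by
  obtain ⟨d, hd⟩ := IsAlgClosed.exists_eq_mul_self (s ^ 2 - 4 * p)
  refine ⟨(s + d) / 2, (s - d) / 2, by field_simp; ring, ?_⟩
  field_simp
  linear_combination hd

theorem Complex.im_eq_zero_or_eq_conj {a b : ℂ} (hs : (a + b).im = 0) (hp : (a * b).im = 0) :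
    (a.im = 0 ∧ b.im = 0) ∨ b = conj a := by
  simp only [Complex.add_im, Complex.mul_im] at hs hp
  have hb : b.im = -a.im := by linarith
  rw [hb] at hp
  have : a.im * (b.re - a.re) = 0 := by linarith
  rcases mul_eq_zero.mp this with ha | hre
  · exact Or.inl ⟨ha, by rw [hb, ha, neg_zero]⟩
  · exact Or.inr (Complex.ext (by rw [Complex.conj_re]; linarith) (by rw [Complex.conj_im, hb]))

theorem one_lt_abs_and_one_lt_abs_iff (a b : ℝ) :
    1 < |a| ∧ 1 < |b| ↔ 1 < |a * b| ∧ |a + b| < |1 + a * b| := by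
  rw [← one_lt_sq_iff_one_lt_abs, ← one_lt_sq_iff_one_lt_abs, ← one_lt_sq_iff_one_lt_abs,
    ← sq_lt_sq]
  have key : (1 + a * b) ^ 2 - (a + b) ^ 2 = (1 - a ^ 2) * (1 - b ^ 2) := by ring
  have hA := sq_nonneg a
  have hB := sq_nonneg b
  constructor
  · rintro ⟨ha, hb⟩
    exact ⟨by nlinarith, by nlinarith⟩
  · rintro ⟨hab, hlt⟩
    rw [mul_pow] at hab
    rcases pos_and_pos_or_neg_and_neg_of_mul_pos (by linarith : 0 < (1 - a ^ 2) * (1 - b ^ 2))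
      with ⟨ha, hb⟩ | ⟨ha, hb⟩
    · nlinarith
    · exact ⟨by linarith, by linarith⟩

theorem one_lt_norm_iff_one_lt_norm_sq_and_abs_two_mul_re_lt (a : ℂ) :
    1 < ‖a‖ ↔ 1 < ‖a‖ ^ 2 ∧ |2 * a.re| < 1 + ‖a‖ ^ 2 := by
  have hre : |2 * a.re| ≤ 2 * ‖a‖ := by
    rw [abs_mul, abs_two]
    exact mul_le_mul_of_nonneg_left (Complex.abs_re_le_norm a) zero_le_two
  constructor
  · intro h
    exact ⟨by nlinarith, by nlinarith⟩
  · rintro ⟨h, -⟩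
    exact (one_lt_sq_iff_one_lt_abs _).mp h |>.trans_eq (abs_norm a)

theorem forall_root_one_lt_norm_iff (s p : ℝ) :
    (∀ z : ℂ, z ^ 2 - s * z + p = 0 → 1 < ‖z‖) ↔ 1 < |p| ∧ |s| < |1 + p| := by
  obtain ⟨a, b, hs, hp⟩ := exists_add_eq_and_mul_eq (s : ℂ) p
  rw [← hs, ← hp, forall_quadratic_root_iff]
  rcases Complex.im_eq_zero_or_eq_conj (by rw [hs, Complex.ofReal_im])
      (by rw [hp, Complex.ofReal_im]) with ⟨ha, hb⟩ | rfl
  · lift a to ℝ using ha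
    lift b to ℝ using hb
    rw [← Complex.ofReal_add, Complex.ofReal_inj] at hs
    rw [← Complex.ofReal_mul, Complex.ofReal_inj] at hp
    simp only [Complex.norm_real, Real.norm_eq_abs, ← hs, ← hp]
    exact one_lt_abs_and_one_lt_abs_iff a b
  · rw [Complex.add_conj, Complex.ofReal_inj] at hs
    rw [Complex.mul_conj, Complex.normSq_eq_norm_sq, Complex.ofReal_inj] at hp
    rw [Complex.norm_conj, and_self, ← hs, ← hp, abs_of_nonneg (sq_nonneg ‖a‖),
      abs_of_nonneg (by positivity : 0 ≤ 1 + ‖a‖ ^ 2)]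
    exact one_lt_norm_iff_one_lt_norm_sq_and_abs_two_mul_re_lt a

theorem explosive_region_iff (θ1 θ2 : ℝ) :
    (1 + |θ1| < θ2 ∨ (θ2 < -1 ∧ θ2 < 1 - |θ1|)) ↔ 1 < |θ2| ∧ |θ1| < |1 - θ2| := by
  rcases le_or_gt θ2 1 with h | h
  · rw [abs_of_nonneg (sub_nonneg.2 h), lt_abs]
    constructor
    · rintro (h' | ⟨h1, h2⟩)
      · linarith [abs_nonneg θ1]
      · exact ⟨Or.inr (by linarith), by linarith⟩
    · rintro ⟨h1 | h1, h2⟩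
      · linarith
      · exact Or.inr ⟨by linarith, by linarith⟩
  · rw [abs_of_pos (by linarith : 0 < θ2), abs_of_neg (by linarith : 1 - θ2 < 0)]
    constructor
    · rintro (h' | ⟨h1, -⟩)
      · exact ⟨h, by linarith⟩
      · linarith
    · rintro ⟨-, h2⟩
      exact Or.inl (by linarith)

/-- for `d = 2`, both eigenvalues of `B(θ) = [[θ₁, θ₂],[1, 0]]`
(i.e. both complex roots of `λ² - θ₁λ - θ₂`) have modulus `> 1` iff
`θ₂ > 1 + |θ₁|`, or `θ₂ < -1` and `θ₂ < 1 - |θ₁|`. -/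
theorem explosive_region_d2 (θ1 θ2 : ℝ) :
    (∀ z : ℂ, z ^ 2 - (θ1 : ℂ) * z - (θ2 : ℂ) = 0 → 1 < ‖z‖) ↔
      (1 + |θ1| < θ2 ∨ (θ2 < -1 ∧ θ2 < 1 - |θ1|)) := by
  rw [explosive_region_iff, ← abs_neg θ2, sub_eq_add_neg (1 : ℝ), ← forall_root_one_lt_norm_iff]
  simp only [Complex.ofReal_neg, sub_eq_add_neg]
end

section
/- Let B ∈ ℝ^{d×d} be invertible with spectral radius ρ(B^{-1}) < 1, let (W_n)_{n≥1} be a sequence of ℝ^d-valued random vectors, and let (Ū_n)_{n≥0} be any solution of Ū_n = BŪ_{n−1} + W_n (n ≥ 1) that is bounded in probability, with W_n = Z_n e₁ for i.i.d. centered square-integrable (Z_n). Then Ū₀ = −∑_{j=1}^∞ B^{-j} W_j almost surely; that is, the stationary solution is the only solution bounded in probability. -/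
/-!
Unrolling the recursion with `B⁻¹ * B = 1` gives `B⁻ⁿ Ūₙ = Ū₀ + ∑_{j=1}^n B⁻ʲ Wⱼ`.
By Gelfand's formula `‖B⁻ⁿ‖` is summable, so the terms of the series have summable expected
norms and the series converges almost surely; and `B⁻ⁿ Ūₙ → 0` in probability, because
`‖B⁻ⁿ‖ → 0` while `Ūₙ` is bounded in probability. A limit in probability agrees almost surely
with an almost sure limit, hence `Ū₀ + ∑_{j≥1} B⁻ʲ Wⱼ = 0` almost surely.
-/

open MeasureTheory ProbabilityTheory Filter Topology Matrix
open scoped ENNReal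

attribute [local instance] Matrix.linftyOpNormedAddCommGroup Matrix.linftyOpNormedRing
  Matrix.linftyOpNormedAlgebra

theorem summable_norm_pow_of_spectralRadius_lt_one {A : Type*} [NormedRing A]
    [NormedAlgebra ℂ A] [CompleteSpace A] {a : A} (ha : spectralRadius ℂ a < 1) :
    Summable fun n : ℕ => ‖a ^ n‖ := by
  obtain ⟨r, hra, hr1⟩ := ENNReal.lt_iff_exists_nnreal_btwn.mp ha
  have hroot : ∀ᶠ n : ℕ in atTop, ENNReal.ofReal (‖a ^ n‖ ^ (1 / n : ℝ)) < r :=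
    (spectrum.pow_norm_pow_one_div_tendsto_nhds_spectralRadius a).eventually_lt_const hra
  refine .of_norm_bounded_eventually_nat (summable_geometric_of_lt_one r.2 (mod_cast hr1)) ?_
  filter_upwards [hroot, eventually_ne_atTop 0] with n hn hn0
  rw [ENNReal.ofReal_lt_coe_iff (by positivity)] at hn
  have hpow : ‖a ^ n‖ = (‖a ^ n‖ ^ (1 / n : ℝ)) ^ n := by
    rw [one_div, Real.rpow_inv_natCast_pow (norm_nonneg _) hn0]
  rw [norm_norm, hpow]
  exact pow_le_pow_left₀ (by positivity) hn.le n

namespace Matrix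

theorem linfty_opNorm_map_ofReal {m n : Type*} [Fintype m] [Fintype n] (A : Matrix m n ℝ) :
    ‖A.map Complex.ofReal‖ = ‖A‖ := by
  simp only [linfty_opNorm_def, map_apply, Complex.nnnorm_real]

theorem summable_linfty_opNorm_pow {n : Type*} [Fintype n] [DecidableEq n] [Nonempty n]
    (A : Matrix n n ℝ) (hA : ∀ z ∈ spectrum ℂ (A.map Complex.ofReal), ‖z‖ < 1) :
    Summable fun k : ℕ => ‖A ^ k‖ := by
  have hρ : spectralRadius ℂ (A.map Complex.ofReal) < 1 := by
    exact_mod_cast spectrum.spectralRadius_lt_of_forall_lt _ hA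
  convert summable_norm_pow_of_spectralRadius_lt_one hρ using 2 with k
  rw [← linfty_opNorm_map_ofReal (A ^ k)]
  exact congrArg _ (A.map_pow Complex.ofRealHom k)

theorem pow_mulVec_eq_add_sum_of_mulVec_succ {n R : Type*} [Fintype n] [DecidableEq n]
    [CommSemiring R] {A B : Matrix n n R} (hAB : A * B = 1) {x w : ℕ → n → R}
    (hx : ∀ k, x (k + 1) = B *ᵥ x k + w (k + 1)) (k : ℕ) :
    A ^ k *ᵥ x k = x 0 + ∑ j ∈ Finset.range k, A ^ (j + 1) *ᵥ w (j + 1) := by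
  induction k with
  | zero => simp
  | succ k ih =>
    rw [hx, mulVec_add, mulVec_mulVec, pow_succ, mul_assoc, hAB, mul_one, ih,
      Finset.sum_range_succ, add_assoc, ← pow_succ]

end Matrix

theorem MeasureTheory.TendstoInMeasure.ae_eq_of_ae_tendsto {Ω ι E : Type*} [MeasurableSpace Ω]
    {P : Measure Ω} [EMetricSpace E] {l : Filter ι} [l.NeBot] [l.IsCountablyGenerated]
    {f : ι → Ω → E} {g h : Ω → E} (hg : TendstoInMeasure P f l g)
    (hh : ∀ᵐ ω ∂P, Tendsto (fun i => f i ω) l (𝓝 (h ω))) :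
    g =ᵐ[P] h := by
  obtain ⟨ns, hns, hg_ae⟩ := hg.exists_seq_tendsto_ae'
  filter_upwards [hg_ae, hh] with ω hgω hhω
  exact tendsto_nhds_unique hgω (hhω.comp hns)

namespace ProbabilityTheory

variable {Ω : Type*} [MeasurableSpace Ω] {P : Measure Ω}

theorem ae_summable_smul_of_identDistrib {E : Type*} [NormedAddCommGroup E] [NormedSpace ℝ E]
    [CompleteSpace E] {Z : ℕ → Ω → ℝ} {Y : Ω → ℝ} (hZ : ∀ j, IdentDistrib (Z j) Y P P)
    (hY : Integrable Y P) {v : ℕ → E} (hv : Summable fun j => ‖v j‖) :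
    ∀ᵐ ω ∂P, Summable fun j => Z j ω • v j := by
  have hmeas : ∀ j, AEMeasurable (fun ω => ‖Z j ω‖ₑ * ‖v j‖ₑ) P :=
    fun j => (hZ j).aemeasurable_fst.enorm.mul_const _
  have hfin : ∫⁻ ω, ∑' j, ‖Z j ω‖ₑ * ‖v j‖ₑ ∂P ≠ ∞ := by
    have hZ_lintegral : ∀ j, ∫⁻ ω, ‖Z j ω‖ₑ ∂P = ∫⁻ ω, ‖Y ω‖ₑ ∂P :=
      fun j => ((hZ j).comp measurable_enorm).lintegral_eq
    rw [lintegral_tsum hmeas]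
    simp_rw [lintegral_mul_const'' _ (hZ _).aemeasurable_fst.enorm, hZ_lintegral,
      ENNReal.tsum_mul_left]
    exact ENNReal.mul_ne_top hY.2.ne (tsum_enorm_ne_top_iff_summable_norm.2 hv)
  filter_upwards [ae_lt_top' (AEMeasurable.tsum hmeas) hfin] with ω hω
  refine .of_norm (tsum_enorm_ne_top_iff_summable_norm.1 ?_)
  simpa only [enorm_smul] using hω.ne

def BoundedInProbability {ι E : Type*} [Norm E] (P : Measure Ω) (X : ι → Ω → E) : Prop :=
  Tendsto (fun M : ℝ => ⨆ i, P {ω | M < ‖X i ω‖}) atTop (𝓝 0)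

theorem BoundedInProbability.tendstoInMeasure_zero {ι E F : Type*} [SeminormedAddCommGroup E]
    [SeminormedAddCommGroup F] {X : ι → Ω → E} {Y : ι → Ω → F} {l : Filter ι} {c : ι → ℝ}
    (hX : BoundedInProbability P X) (hc : Tendsto c l (𝓝 0))
    (hY : ∀ i ω, ‖Y i ω‖ ≤ c i * ‖X i ω‖) : TendstoInMeasure P Y l 0 := by
  rw [tendstoInMeasure_iff_norm]
  intro ε hε
  simp only [Pi.zero_apply, sub_zero]
  rw [ENNReal.tendsto_nhds_zero]
  intro δ hδ
  obtain ⟨M, hMδ, hM⟩ :=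
    ((ENNReal.tendsto_nhds_zero.1 hX δ hδ).and (eventually_ge_atTop 0)).exists
  have hcM : ∀ᶠ i in l, c i * M < ε := by
    have hcM_zero : Tendsto (fun i => c i * M) l (𝓝 0) := by simpa using hc.mul_const M
    exact hcM_zero.eventually_lt_const hε
  filter_upwards [hcM] with i hi
  calc P {ω | ε ≤ ‖Y i ω‖} ≤ P {ω | M < ‖X i ω‖} := measure_mono fun ω (hYω : ε ≤ _) => ?_
    _ ≤ ⨆ j, P {ω | M < ‖X j ω‖} := le_iSup (fun j => P {ω | M < ‖X j ω‖}) i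
    _ ≤ δ := hMδ
  refine lt_of_not_ge fun (hXω : ‖X i ω‖ ≤ M) => ?_
  have hcX : c i * ‖X i ω‖ < ε := by
    rcases le_or_gt 0 (c i) with hc0 | hc0
    · exact (mul_le_mul_of_nonneg_left hXω hc0).trans_lt hi
    · exact (mul_nonpos_of_nonpos_of_nonneg hc0.le (norm_nonneg _)).trans_lt hε
  linarith [hY i ω]

end ProbabilityTheory

theorem bounded_in_probability_unique_general
    (d : ℕ) (hd : 0 < d) (B : Matrix (Fin d) (Fin d) ℝ) (hB : IsUnit B)
    (hρ : ∀ z ∈ spectrum ℂ ((B⁻¹).map (Complex.ofReal)), ‖z‖ < 1)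
    {Ω : Type*} [MeasurableSpace Ω] (P : Measure Ω) [IsProbabilityMeasure P]
    (Z : ℕ → Ω → ℝ) (hZmeas : ∀ j, Measurable (Z j))
    (hZident : ∀ j, P.map (Z j) = P.map (Z 1))
    (hZ2 : MemLp (Z 1) 2 P)
    (U : ℕ → Ω → (Fin d → ℝ))
    (hrec : ∀ n : ℕ, 1 ≤ n → ∀ ω,
      U n ω = B.mulVec (U (n - 1) ω) + Z n ω • (Pi.single (⟨0, hd⟩ : Fin d) 1 : Fin d → ℝ))
    (hbdd : Filter.Tendsto (fun M : ℝ => ⨆ n : ℕ, P {ω | M < ‖U n ω‖})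
      Filter.atTop (nhds 0)) :
    ∀ᵐ ω ∂P, U 0 ω
      = -∑' j : ℕ, Z (j + 1) ω • (B⁻¹ ^ (j + 1)).mulVec
          (Pi.single (⟨0, hd⟩ : Fin d) 1 : Fin d → ℝ) := by
  set e : Fin d → ℝ := Pi.single (⟨0, hd⟩ : Fin d) 1
  have : Nonempty (Fin d) := ⟨⟨0, hd⟩⟩
  have hpow : Summable fun n => ‖B⁻¹ ^ n‖ := summable_linfty_opNorm_pow _ hρ
  have hseries : ∀ᵐ ω ∂P, Summable fun j => Z (j + 1) ω • B⁻¹ ^ (j + 1) *ᵥ e :=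
    ae_summable_smul_of_identDistrib
      (fun _ => ⟨(hZmeas _).aemeasurable, (hZmeas 1).aemeasurable, hZident _⟩)
      (hZ2.integrable one_le_two) (.of_nonneg_of_le (fun _ => norm_nonneg _)
        (fun _ => linfty_opNorm_mulVec _ e) (((summable_nat_add_iff 1).2 hpow).mul_right ‖e‖))
  have hpartial : ∀ ω n, B⁻¹ ^ n *ᵥ U n ω
      = U 0 ω + ∑ j ∈ Finset.range n, Z (j + 1) ω • B⁻¹ ^ (j + 1) *ᵥ e := fun ω n => by
    simp_rw [← mulVec_smul]
    exact pow_mulVec_eq_add_sum_of_mulVec_succ (nonsing_inv_mul B ((isUnit_iff_isUnit_det B).1 hB))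
      (x := fun n => U n ω) (w := fun n => Z n ω • e)
      (fun k => by simpa using hrec (k + 1) k.succ_pos ω) n
  have hlim : TendstoInMeasure P (fun n ω => B⁻¹ ^ n *ᵥ U n ω) atTop 0 :=
    BoundedInProbability.tendstoInMeasure_zero hbdd hpow.tendsto_atTop_zero
      fun _ _ => linfty_opNorm_mulVec _ _
  filter_upwards [hlim.ae_eq_of_ae_tendsto (h := fun ω => U 0 ω + ∑' j, _) (hseries.mono
    fun ω hω => by simpa only [hpartial] using hω.hasSum.tendsto_sum_nat.const_add (U 0 ω))]
    with ω hω
  exact eq_neg_of_add_eq_zero_left hω.symm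

/-- if `ρ(B⁻¹) < 1` and `(Ū_n)` is a solution of
`Ū_n = B Ū_{n-1} + Z_n e₁` which is bounded in probability, then
`Ū₀ = -∑_{j=1}^∞ B^{-j} Z_j e₁` almost surely: the stationary solution is the
only solution bounded in probability. -/
theorem bounded_in_probability_unique
    (d : ℕ) (hd : 0 < d) (B : Matrix (Fin d) (Fin d) ℝ) (hB : IsUnit B)
    (hρ : ∀ z ∈ spectrum ℂ ((B⁻¹).map (Complex.ofReal)), ‖z‖ < 1)
    {Ω : Type*} [MeasurableSpace Ω] (P : Measure Ω) [IsProbabilityMeasure P]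
    (Z : ℕ → Ω → ℝ) (hZmeas : ∀ j, Measurable (Z j))
    (hZindep : iIndepFun Z P)
    (hZident : ∀ j, P.map (Z j) = P.map (Z 1))
    (hZ2 : MemLp (Z 1) 2 P)
    (hZmean : ∫ ω, Z 1 ω ∂P = 0)
    (U : ℕ → Ω → (Fin d → ℝ))
    (hrec : ∀ n : ℕ, 1 ≤ n → ∀ ω,
      U n ω = B.mulVec (U (n - 1) ω) + Z n ω • (Pi.single (⟨0, hd⟩ : Fin d) 1 : Fin d → ℝ))
    (hbdd : Filter.Tendsto (fun M : ℝ => ⨆ n : ℕ, P {ω | M < ‖U n ω‖})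
      Filter.atTop (nhds 0)) :
    ∀ᵐ ω ∂P, U 0 ω
      = -∑' j : ℕ, Z (j + 1) ω • (B⁻¹ ^ (j + 1)).mulVec
          (Pi.single (⟨0, hd⟩ : Fin d) 1 : Fin d → ℝ) :=
  bounded_in_probability_unique_general d hd B hB hρ P Z hZmeas hZident hZ2 U hrec hbdd
end
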